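/- A subshift Σ is chain-mixing if and only if for every pair of words u, v in L(Σ) with |u| = |v| there exists k ∈ ℕ such that for every n > k there exists a chain of length n from u to v in L(Σ). -/

import Mathlib

/-! Common definitions: labelled graphs, walks, follower sets, the linking
relation, subshifts over `ℤ → A`, chains, and attractors. -/

structure LGraph (A : Type) where
  V : Type
  E : Type
  [finV : Finite V]
  [finE : Finite E]
  s : E → V
  t : E → V
  lab : E → A

attribute [instance] LGraph.finV LGraph.finE

namespace LGraph

variable {A : Type}

/-- `Walk G u v es` : the list of edges `es` forms a walk from `u` to `v`. -/
inductive Walk (G : LGraph A) : G.V → G.V → List G.E → Prop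
  | nil (v : G.V) : Walk G v v []
  | cons {w : G.V} {es : List G.E} (e : G.E) (h : Walk G (G.t e) w es) :
      Walk G (G.s e) w (e :: es)

/-- There is an edge from `u` to `v`. -/
def EdgeRel (G : LGraph A) (u v : G.V) : Prop := ∃ e : G.E, G.s e = u ∧ G.t e = v

/-- `v` is reachable from `u` by a directed walk. -/
def Reach (G : LGraph A) : G.V → G.V → Prop := Relation.ReflTransGen G.EdgeRel

/-- `u` and `v` lie in the same strongly connected component. -/
def SameComp (G : LGraph A) (u v : G.V) : Prop := G.Reach u v ∧ G.Reach v u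

/-- The number of strongly connected components of `G`. -/
noncomputable def numComponents (G : LGraph A) : ℕ :=
  Nat.card {K : Set G.V // ∃ v : G.V, K = {u : G.V | G.SameComp v u}}

/-- The restricted follower set of `v` : words labelling walks starting at `v`
that stay inside the strongly connected component of `v`. -/
def FollowR (G : LGraph A) (v : G.V) : Set (List A) :=
  {w | ∃ (u : G.V) (es : List G.E), G.Walk v u es ∧ es.map G.lab = w ∧
        ∀ e ∈ es, G.SameComp v (G.s e) ∧ G.SameComp v (G.t e)}

/-- Two vertices are linked iff their restricted follower sets have infinite
intersection. -/
def Linked (G : LGraph A) (u v : G.V) : Prop := (G.FollowR u ∩ G.FollowR v).Infinite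

/-- `≈` : the reflexive-transitive closure of the linked relation. -/
def Approx (G : LGraph A) : G.V → G.V → Prop := Relation.ReflTransGen G.Linked

/-- One step in the linking graph `G/≈` (lifted to `G`): either an edge of `G`
or a jump between linked vertices. -/
def GenStep (G : LGraph A) (u v : G.V) : Prop := G.EdgeRel u v ∨ G.Linked u v

/-- Reachability in the linking graph `G/≈`, expressed on vertices of `G`. -/
def GenReach (G : LGraph A) : G.V → G.V → Prop := Relation.ReflTransGen G.GenStep

/-- The language of `G` : words labelling finite walks in `G`. -/
def Lang (G : LGraph A) : Set (List A) :=
  {w | ∃ (u v : G.V) (es : List G.E), G.Walk u v es ∧ es.map G.lab = w}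

/-- `w` has a presentation in the subgraph of `G` induced by the vertex set `S`. -/
def PresIn (G : LGraph A) (S : Set G.V) (w : List A) : Prop :=
  ∃ (u v : G.V) (es : List G.E), G.Walk u v es ∧ es.map G.lab = w ∧
    u ∈ S ∧ v ∈ S ∧ ∀ e ∈ es, G.s e ∈ S ∧ G.t e ∈ S

/-- A presentation of the first `n` letters of `w`, with explicit vertex
sequence `v` and edge sequence `e`. -/
def PresFun (G : LGraph A) (n : ℕ) (w : ℕ → A) (v : ℕ → G.V) (e : ℕ → G.E) : Prop :=
  ∀ i < n, G.s (e i) = v i ∧ G.t (e i) = v (i + 1) ∧ G.lab (e i) = w i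

/-- `S` is a union of `≈`-equivalence classes, i.e. `S = π⁻¹(π(S))` for the
projection `π : G → G/≈`. -/
def SaturatedSet (G : LGraph A) (S : Set G.V) : Prop :=
  ∀ u v : G.V, G.Approx u v → (u ∈ S ↔ v ∈ S)

/-- No edge leaves `S` : together with saturation this says that the image of
`S` in `G/≈` is a terminal subgraph. -/
def ForwardClosed (G : LGraph A) (S : Set G.V) : Prop :=
  ∀ e : G.E, G.s e ∈ S → G.t e ∈ S

/-- Every vertex has an ingoing and an outgoing edge. -/
def Essential (G : LGraph A) : Prop :=
  ∀ v : G.V, (∃ e : G.E, G.t e = v) ∧ (∃ e : G.E, G.s e = v)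

/-- A biinfinite presentation of `x` (vertex sequence `v`, edge sequence `e`)
staying in the vertex set `S`. -/
def BiPresIn (G : LGraph A) (S : Set G.V) (x : ℤ → A) (v : ℤ → G.V) (e : ℤ → G.E) : Prop :=
  ∀ i : ℤ, G.s (e i) = v i ∧ G.t (e i) = v (i + 1) ∧ G.lab (e i) = x i ∧ v i ∈ S

/-- The subshift of biinfinite label sequences of biinfinite walks of `G`
staying in `S`. -/
def SigmaIn (G : LGraph A) (S : Set G.V) : Set (ℤ → A) :=
  {x | ∃ v e, G.BiPresIn S x v e}

/-- The sofic subshift `Σ(G)`. -/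
def Sigma' (G : LGraph A) : Set (ℤ → A) := G.SigmaIn Set.univ

/-- The linking graph `G/≈` is strongly connected. -/
def StronglyConnectedQuot (G : LGraph A) : Prop := ∀ u v : G.V, G.GenReach u v

/-- The linking graph `G/≈` is periodic : its vertices can be partitioned into
`n > 1` classes (indexed by `ZMod n`, each a union of `≈`-classes) so that every
edge advances the class index by one. -/
def PeriodicQuot (G : LGraph A) : Prop :=
  ∃ n : ℕ, 1 < n ∧ ∃ c : G.V → ZMod n,
    (∀ u v : G.V, G.Approx u v → c u = c v) ∧ ∀ e : G.E, c (G.t e) = c (G.s e) + 1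

/-- The label product `G * H`. -/
def labelProduct (G H : LGraph A) : LGraph A where
  V := G.V × H.V
  E := {p : G.E × H.E // G.lab p.1 = H.lab p.2}
  s := fun p => (G.s p.1.1, H.s p.1.2)
  t := fun p => (G.t p.1.1, H.t p.1.2)
  lab := fun p => G.lab p.1.1

end LGraph

section Subshift

variable {A : Type}

/-- The shift map `σ`. -/
def shift (x : ℤ → A) : ℤ → A := fun i => x (i + 1)

open Classical in
/-- The metric `ρ(x,y) = 2^{-n}` where `n` is minimal with `x_n ≠ y_n` or
`x_{-n} ≠ y_{-n}` (and `ρ(x,x) = 0`). -/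
noncomputable def rho (x y : ℤ → A) : ℝ :=
  if x = y then 0
  else (2 : ℝ) ^ (-((sInf {n : ℕ | ∃ i : ℤ, i.natAbs = n ∧ x i ≠ y i} : ℕ) : ℤ))

/-- Closedness with respect to the metric `rho`. -/
def RhoClosed (Sig : Set (ℤ → A)) : Prop :=
  ∀ x : ℤ → A, (∀ ε : ℝ, 0 < ε → ∃ y ∈ Sig, rho x y < ε) → x ∈ Sig

/-- A subshift : a closed, strongly shift-invariant subset of `A^ℤ`. -/
def IsSubshift (Sig : Set (ℤ → A)) : Prop :=
  RhoClosed Sig ∧ shift '' Sig = Sig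

/-- The language of the subshift `Sig` : all finite factors of its points. -/
def lang (Sig : Set (ℤ → A)) : Set (List A) :=
  {w | ∃ x ∈ Sig, ∃ k : ℤ, ∀ (i : ℕ) (h : i < w.length), w.get ⟨i, h⟩ = x (k + i)}

/-- The central factor `x_{[-l,l]}` of a biinfinite word. -/
def central (x : ℤ → A) (l : ℕ) : List A :=
  (List.range (2 * l + 1)).map fun i => x ((i : ℤ) - (l : ℤ))

/-- `ChainWord L u v n w` : `w` is a chain of length `n` from `u` to `v` in the
language `L` : `|w| = n + |u|`, `w` has prefix `u` and suffix `v`, and every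
factor of `w` of length at most `|u|` belongs to `L`. -/
def ChainWord (L : Set (List A)) (u v : List A) (n : ℕ) (w : List A) : Prop :=
  u.length = v.length ∧ w.length = n + u.length ∧
  w.take u.length = u ∧ w.drop n = v ∧
  ∀ z : List A, z <:+: w → z.length ≤ u.length → z ∈ L

/-- An `ε`-chain of length `n > 0` from `x` to `y` inside `Sig`. -/
def EpsChain (Sig : Set (ℤ → A)) (ε : ℝ) (n : ℕ) (x y : ℤ → A) : Prop :=
  0 < n ∧ ∃ z : ℕ → ℤ → A, z 0 = x ∧ z n = y ∧ (∀ i ≤ n, z i ∈ Sig) ∧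
    ∀ i < n, rho (shift (z i)) (z (i + 1)) < ε

/-- The chain relation of `(Sig, σ)`. -/
def ChainRel (Sig : Set (ℤ → A)) (x y : ℤ → A) : Prop :=
  ∀ ε : ℝ, 0 < ε → ∃ n : ℕ, EpsChain Sig ε n x y

/-- Chain-transitivity. -/
def ChainTransitive (Sig : Set (ℤ → A)) : Prop :=
  ∀ x ∈ Sig, ∀ y ∈ Sig, ChainRel Sig x y

/-- Chain-mixing. -/
def ChainMixing (Sig : Set (ℤ → A)) : Prop :=
  ∀ x ∈ Sig, ∀ y ∈ Sig, ∀ ε : ℝ, 0 < ε → ∃ k : ℕ, ∀ n, k < n → EpsChain Sig ε n x y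

/-- Distance from a point to a set, with respect to `rho`. -/
noncomputable def distTo (x : ℤ → A) (Y : Set (ℤ → A)) : ℝ := sInf (rho x '' Y)

/-- `Y` is an attractor of the dynamical system `(Sig, σ)`. -/
def IsAttractor (Sig Y : Set (ℤ → A)) : Prop :=
  Y.Nonempty ∧ Y ⊆ Sig ∧ RhoClosed Y ∧ shift '' Y = Y ∧
  (∀ ε : ℝ, 0 < ε → ∃ δ : ℝ, 0 < δ ∧ ∀ x ∈ Sig, distTo x Y < δ →
    ∀ n : ℕ, 0 < n → distTo (shift^[n] x) Y < ε) ∧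
  (∃ δ : ℝ, 0 < δ ∧ ∀ x ∈ Sig, distTo x Y < δ →
    Filter.Tendsto (fun n : ℕ => distTo (shift^[n] x) Y) Filter.atTop (nhds 0))

end Subshift

/-!
For `ε = 2^{-m}`, an `ε`-chain is a sequence of points in which each point, once shifted, agrees
with the next one on `[-m, m]`. Continuing the chain along the orbit of its endpoint and reading
the letter at the origin of each point gives a word whose factors of length `≤ m` are read off
single points of `Σ`, i.e. a chain of words. Conversely, every window of length `2m + 3` of a
chain of words lies in `L(Σ)`, so it is the central block of a point of `Σ`, and the points
attached to consecutive windows form a `2^{-m}`-chain.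
-/

section ChainMixingLanguage

variable {A : Type}

theorem rho_lt_two_zpow_iff (x y : ℤ → A) (m : ℕ) :
    rho x y < 2 ^ (-(m : ℤ)) ↔ ∀ t : ℤ, t.natAbs ≤ m → x t = y t := by
  unfold rho
  split_ifs with hxy
  · simp [hxy]
  · set D := {n : ℕ | ∃ i : ℤ, i.natAbs = n ∧ x i ≠ y i}
    obtain ⟨i₀, hi₀⟩ : ∃ i, x i ≠ y i := by simpa [funext_iff] using hxy
    obtain ⟨i, hi, hxyi⟩ : sInf D ∈ D := Nat.sInf_mem ⟨_, i₀, rfl, hi₀⟩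
    rw [zpow_lt_zpow_iff_right₀ one_lt_two, neg_lt_neg_iff, Nat.cast_lt]
    constructor
    · intro hlt t ht
      by_contra hne
      have := Nat.sInf_le (show t.natAbs ∈ D from ⟨t, rfl, hne⟩)
      omega
    · intro hagree
      by_contra! hle
      exact hxyi (hagree i (hi ▸ hle))

theorem EpsChain.mono {Sig : Set (ℤ → A)} {ε ε' : ℝ} {n : ℕ} {x y : ℤ → A}
    (h : EpsChain Sig ε n x y) (hε : ε ≤ ε') : EpsChain Sig ε' n x y := by
  obtain ⟨hn, z, hz0, hzn, hmem, hstep⟩ := h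
  exact ⟨hn, z, hz0, hzn, hmem, fun i hi => (hstep i hi).trans_le hε⟩

-- `central` casts `List.range` to `List ℤ` through the list monad, hence the `flatMap`.
theorem central_eq_map (x : ℤ → A) (m : ℕ) :
    central x m = (List.range (2 * m + 1)).map fun i : ℕ => x (i - m) := by
  rw [central, List.bind_eq_flatMap, ← Function.comp_def pure, List.flatMap_pure_eq_map,
    List.map_map]
  rfl

@[simp]
theorem length_central (x : ℤ → A) (m : ℕ) : (central x m).length = 2 * m + 1 := by
  simp [central_eq_map]

@[simp]
theorem getElem_central (x : ℤ → A) (m s : ℕ) (hs : s < (central x m).length) :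
    (central x m)[s] = x (s - m) := by
  simp [central_eq_map]

theorem getElem?_central (x : ℤ → A) {m : ℕ} {t : ℤ} (ht : t.natAbs ≤ m) :
    (central x m)[(t + m).toNat]? = some (x t) := by
  rw [List.getElem?_eq_getElem (by simp; omega), getElem_central]
  congr 2
  omega

theorem central_mem_lang {Sig : Set (ℤ → A)} {x : ℤ → A} (hx : x ∈ Sig) (m : ℕ) :
    central x m ∈ lang Sig :=
  ⟨x, hx, -m, fun i hi => by simp [neg_add_eq_sub]⟩

theorem apply_natCast_eq_of_shift_agree {Z : ℕ → ℤ → A} {m : ℕ}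
    (hZ : ∀ i (t : ℤ), t.natAbs ≤ m → Z i (t + 1) = Z (i + 1) t) {s : ℕ} (hs : s ≤ m) (i : ℕ) :
    Z i s = Z (i + s) 0 := by
  induction s generalizing i with
  | zero => simp
  | succ s ih =>
    rw [Nat.cast_succ, hZ i s (by omega), ih (by omega), Nat.add_right_comm, Nat.add_assoc]

theorem rho_shift_lt_of_central_eq_window {p q : ℤ → A} {w : List A} {m i : ℕ}
    (hp : central p (m + 1) = (w.drop i).take (2 * (m + 1) + 1))
    (hq : central q (m + 1) = (w.drop (i + 1)).take (2 * (m + 1) + 1)) :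
    rho (shift p) q < 2 ^ (-(m : ℤ)) := by
  refine (rho_lt_two_zpow_iff _ _ m).2 fun t ht => ?_
  have hpt := getElem?_central p (t := t + 1) (m := m + 1) (by omega)
  have hqt := getElem?_central q (t := t) (m := m + 1) (by omega)
  rw [hp, List.getElem?_take, if_pos (by omega), List.getElem?_drop] at hpt
  rw [hq, List.getElem?_take, if_pos (by omega), List.getElem?_drop] at hqt
  rw [show i + (t + 1 + ((m + 1 : ℕ) : ℤ)).toNat = i + 1 + (t + ((m + 1 : ℕ) : ℤ)).toNat by omega,
    hqt, Option.some_inj] at hpt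
  exact hpt.symm

section ShiftInvariant

variable {Sig : Set (ℤ → A)} (hSig : shift '' Sig = Sig)
include hSig

theorem shift_mem {x : ℤ → A} (hx : x ∈ Sig) : shift x ∈ Sig :=
  hSig ▸ Set.mem_image_of_mem shift hx

theorem shift_iterate_mem {x : ℤ → A} (hx : x ∈ Sig) (j : ℕ) : shift^[j] x ∈ Sig := by
  induction j with
  | zero => exact hx
  | succ j ih => exact Function.iterate_succ_apply' shift j x ▸ shift_mem hSig ih

theorem translate_mem {x : ℤ → A} (hx : x ∈ Sig) (k : ℤ) : (fun i => x (i + k)) ∈ Sig := by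
  induction k using Int.induction_on with
  | zero => simpa using hx
  | succ k ih =>
    convert shift_mem hSig ih using 1
    funext i
    simp only [shift, add_assoc, add_comm (1 : ℤ)]
  | pred k ih =>
    obtain ⟨y, hy, hyx⟩ := hSig.symm ▸ ih
    convert hy using 1
    funext i
    have := congrFun hyx (i - 1)
    simp only [shift, sub_add_cancel] at this
    rw [this]
    ring_nf

theorem exists_mem_of_mem_lang {w : List A} (hw : w ∈ lang Sig) (c : ℤ) :
    ∃ y ∈ Sig, ∀ (i : ℕ) (hi : i < w.length), w[i] = y (c + i) := by
  obtain ⟨x, hx, k, hk⟩ := hw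
  refine ⟨_, translate_mem hSig hx (k - c), fun i hi => ?_⟩
  rw [← List.get_eq_getElem (i := ⟨i, hi⟩), hk]
  ring_nf

theorem exists_central_eq_of_mem_lang {z : List A} (hz : z ∈ lang Sig) {m : ℕ}
    (hlen : z.length = 2 * m + 1) : ∃ p ∈ Sig, central p m = z := by
  obtain ⟨p, hp, hpz⟩ := exists_mem_of_mem_lang hSig hz (-m)
  refine ⟨p, hp, List.ext_getElem (by simp [hlen]) fun s _ hs => ?_⟩
  rw [getElem_central, hpz s hs, neg_add_eq_sub]

theorem EpsChain.exists_shift_agree_extension {m n : ℕ} {x y : ℤ → A}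
    (h : EpsChain Sig (2 ^ (-(m : ℤ))) n x y) :
    ∃ Z : ℕ → ℤ → A, Z 0 = x ∧ Z n = y ∧ (∀ i, Z i ∈ Sig) ∧
      ∀ i (t : ℤ), t.natAbs ≤ m → Z i (t + 1) = Z (i + 1) t := by
  obtain ⟨-, z, hz0, hzn, hmem, hstep⟩ := h
  -- `i - n` truncates: this is `z i` up to `n` and the orbit of `y` afterwards.
  refine ⟨fun i => shift^[i - n] (z (min i n)), by simpa using hz0, by simpa using hzn,
    fun i => shift_iterate_mem hSig (hmem _ (min_le_right i n)) _, fun i t ht => ?_⟩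
  rcases lt_or_ge i n with hi | hi
  · simpa [Nat.sub_eq_zero_of_le hi.le, Nat.sub_eq_zero_of_le hi, hi.le, hi, shift] using
      (rho_lt_two_zpow_iff _ _ m).1 (hstep i hi) t ht
  · simp only [min_eq_right hi, min_eq_right (hi.trans (Nat.le_succ i)),
      Nat.sub_add_comm hi, Function.iterate_succ_apply']
    rfl

theorem exists_chainWord_of_epsChain {u v : List A} {x y : ℤ → A} {n : ℕ}
    (huv : u.length = v.length) (hxu : ∀ (i : ℕ) (hi : i < u.length), u[i] = x i)
    (hyv : ∀ (i : ℕ) (hi : i < v.length), v[i] = y i)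
    (h : EpsChain Sig (2 ^ (-(u.length : ℤ))) n x y) :
    ∃ w : List A, ChainWord (lang Sig) u v n w := by
  obtain ⟨Z, hZ0, hZn, hZmem, hZ⟩ := h.exists_shift_agree_extension hSig
  have hdiag {s : ℕ} (hs : s ≤ u.length) (i : ℕ) : Z i s = Z (i + s) 0 :=
    apply_natCast_eq_of_shift_agree hZ hs i
  refine ⟨(List.range (n + u.length)).map fun j => Z j 0, huv, by simp,
    List.ext_getElem (by simp) fun i _ hi => ?_, List.ext_getElem (by simp [huv]) fun i _ hi => ?_,
    fun z hz hlen => ?_⟩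
  · simp [hxu i hi, ← hZ0, hdiag hi.le]
  · simp [hyv i hi, ← hZn, hdiag (huv ▸ hi.le)]
  · obtain ⟨k, hk, hzk⟩ := List.infix_iff_getElem?.1 hz
    refine ⟨Z k, hZmem k, 0, fun i hi => ?_⟩
    have hzi := hzk i hi
    rw [List.getElem?_map, List.getElem?_range (by simp at hk; omega), Option.map_some,
      Option.some_inj] at hzi
    rw [List.get_eq_getElem, ← hzi, zero_add, hdiag (hi.trans_le hlen).le, Nat.add_comm]

theorem epsChain_of_chainWord_central {x y : ℤ → A} (hx : x ∈ Sig) (hy : y ∈ Sig) {m n : ℕ}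
    {w : List A} (hn : 0 < n)
    (h : ChainWord (lang Sig) (central x (m + 1)) (central y (m + 1)) n w) :
    EpsChain Sig (2 ^ (-(m : ℤ))) n x y := by
  obtain ⟨-, hwlen, hpre, hsuf, hfac⟩ := h
  rw [length_central] at hwlen hpre
  have hwindow (i : ℕ) : ∃ p ∈ Sig, (i = 0 → p = x) ∧ (i = n → p = y) ∧
      (i ≤ n → central p (m + 1) = (w.drop i).take (2 * (m + 1) + 1)) := by
    rcases Nat.eq_zero_or_pos i with rfl | hi
    · exact ⟨x, hx, fun _ => rfl, fun h => absurd h hn.ne, fun _ => by simpa using hpre.symm⟩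
    rcases lt_trichotomy i n with hin | rfl | hni
    · have hinfix : (w.drop i).take (2 * (m + 1) + 1) <:+: w :=
        (List.take_prefix _ _).isInfix.trans (List.drop_suffix _ _).isInfix
      obtain ⟨p, hp, hpw⟩ :=
        exists_central_eq_of_mem_lang hSig (m := m + 1) (hfac _ hinfix (by simp))
          (by simp only [List.length_take, List.length_drop]; omega)
      exact ⟨p, hp, fun h => absurd h hi.ne', fun h => absurd h hin.ne, fun _ => hpw⟩
    · exact ⟨y, hy, fun h => absurd h hi.ne', fun _ => rfl,
        fun _ => by rw [hsuf, List.take_of_length_le (by simp)]⟩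
    · exact ⟨x, hx, fun h => absurd h hi.ne', fun h => absurd h hni.ne',
        fun h => absurd h hni.not_ge⟩
  choose Z hZmem hZ0 hZn hZw using hwindow
  exact ⟨hn, Z, hZ0 0 rfl, hZn n rfl, fun i _ => hZmem i,
    fun i hi => rho_shift_lt_of_central_eq_window (hZw i hi.le) (hZw (i + 1) hi)⟩

end ShiftInvariant

end ChainMixingLanguage

theorem stmt6 {A : Type} (Sig : Set (ℤ → A)) (hS : IsSubshift Sig) :
    ChainMixing Sig ↔
      ∀ u ∈ lang Sig, ∀ v ∈ lang Sig, u.length = v.length →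
        ∃ k : ℕ, ∀ n : ℕ, k < n → ∃ w : List A, ChainWord (lang Sig) u v n w := by
  have hSig := hS.2
  constructor
  · intro hmix u hu v hv huv
    obtain ⟨x, hx, hxu⟩ := exists_mem_of_mem_lang hSig hu 0
    obtain ⟨y, hy, hyv⟩ := exists_mem_of_mem_lang hSig hv 0
    obtain ⟨k, hk⟩ := hmix x hx y hy _ (zpow_pos two_pos (-(u.length : ℤ)))
    exact ⟨k, fun n hn => exists_chainWord_of_epsChain hSig huv (by simpa using hxu)
      (by simpa using hyv) (hk n hn)⟩
  · intro hword x hx y hy ε hε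
    obtain ⟨m, hm⟩ := exists_pow_lt_of_lt_one hε one_half_lt_one
    obtain ⟨k, hk⟩ := hword _ (central_mem_lang hx (m + 1)) _ (central_mem_lang hy (m + 1))
      (by simp)
    refine ⟨k, fun n hn => ?_⟩
    obtain ⟨w, hw⟩ := hk n hn
    exact (epsChain_of_chainWord_central hSig hx hy (by omega) hw).mono
      (by simpa [zpow_neg, inv_pow] using hm.le)
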